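/- arXiv:1109.5705 — 2 statements merged into one kernel-verified Lean document; each statement's English description precedes it below -/
import Mathlib

section
/- If P is a pairwise-locally strongly connected poset that admits an R-grading for some totally ordered set R, then the antichain cutsets of P are exactly the level sets of the grading. -/
/-- An antichain cutset: a set intersecting each maximal chain in exactly one element. -/
def IsAntichainCutset {α : Type*} [PartialOrder α] (A : Set α) : Prop :=
  ∀ c : Set α, IsMaxChain (· ≤ ·) c → ∃! x, x ∈ c ∧ x ∈ A

/-- A poset is strongly connected if any two maximal chains are connected by a finite
sequence of maximal chains in which consecutive chains have symmetric difference of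
cardinality two. -/
def StronglyConnectedOrder (α : Type*) [PartialOrder α] : Prop :=
  ∀ c d : Set α, IsMaxChain (· ≤ ·) c → IsMaxChain (· ≤ ·) d →
    ∃ (n : ℕ) (f : ℕ → Set α), f 0 = c ∧ f n = d ∧
      (∀ i ≤ n, IsMaxChain (· ≤ ·) (f i)) ∧
      ∀ i < n, (symmDiff (f i) (f (i + 1))).ncard = 2

/-- An R-grading: a map restricting to an order isomorphism onto R on each maximal chain. -/
def IsRGrading {α R : Type*} [PartialOrder α] [LinearOrder R] (ρ : α → R) : Prop :=
  ∀ c : Set α, IsMaxChain (· ≤ ·) c →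
    (∀ x ∈ c, ∀ y ∈ c, x ≤ y ↔ ρ x ≤ ρ y) ∧ ∀ r : R, ∃ x ∈ c, ρ x = r

/-!
A level set meets every maximal chain exactly once because `ρ` is a bijection on each of them.
Conversely, let `A` be an antichain cutset. If two maximal chains `C`, `D` differ in exactly two
elements, `A` meets them at the same grade: otherwise its point `x` on `C` lies in `C \ D`, and
both the point of `A` on `D` and the point of `D` of grade `ρ x` lie in the singleton `D \ C`.
Given `u, v ∈ A`, choose a strongly connected interval `[a, b]` containing both; a sequence of
such flips of maximal chains of `[a, b]`, from one through `u` to one through `v`, becomes a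
sequence of flips of maximal chains of the whole poset by splicing each of them into a fixed
maximal chain outside `[a, b]`. Hence `ρ` is constant on `A`, and since `A` meets every maximal
chain, it is a whole level set.
-/

open Set Relation
open scoped symmDiff

lemma exists_isMaxChain_mem {β : Type*} {r : β → β → Prop} (x : β) :
    ∃ C, IsMaxChain r C ∧ x ∈ C := by
  obtain ⟨C, hC, hxC⟩ := (IsChain.singleton (r := r) (a := x)).exists_maxChain
  exact ⟨C, hC, hxC rfl⟩

lemma IsMaxChain.mem_of_isChain_insert {β : Type*} {r : β → β → Prop} {C : Set β} {z : β}
    (hC : IsMaxChain r C) (h : IsChain r (insert z C)) : z ∈ C :=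
  hC.2 h (subset_insert z C) ▸ mem_insert z C

lemma Set.eq_of_ncard_eq_two {β : Type*} {s : Set β} (hs : s.ncard = 2) {x y z : β}
    (hx : x ∈ s) (hy : y ∈ s) (hz : z ∈ s) (hxy : x ≠ y) (hxz : x ≠ z) : y = z := by
  obtain ⟨p, q, -, rfl⟩ := ncard_eq_two.1 hs
  simp only [mem_insert_iff, mem_singleton_iff] at hx hy hz
  grind

lemma IsMaxChain.exists_isMaxChain_inter_eq_image {β : Type*} [LE β] {s : Set β} {c : Set s}
    (hc : IsMaxChain (· ≤ ·) c) : ∃ C : Set β, IsMaxChain (· ≤ ·) C ∧ C ∩ s = Subtype.val '' c := by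
  obtain ⟨C, hC, hcC⟩ :=
    (hc.1.image_of_map_rel _ (· ≤ ·) Subtype.val fun _ _ h => h).exists_maxChain
  refine ⟨C, hC, Subset.antisymm (fun z ⟨hzC, hzs⟩ => ?_) fun z hz => ⟨hcC hz, ?_⟩⟩
  · have htrace : IsChain (· ≤ ·) (Subtype.val ⁻¹' C : Set s) := fun u hu v hv huv =>
      hC.1 hu hv (Subtype.val_injective.ne huv)
    exact ⟨⟨z, hzs⟩, (hc.2 htrace fun u hu => hcC ⟨u, hu, rfl⟩).symm ▸ hzC, rfl⟩
  · exact Subtype.coe_image_subset s c hz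

section Splice

variable {α : Type*} [Preorder α] {a b : α}

lemma le_or_le_of_notMem_Icc {z : α} (ha : z ≤ a ∨ a ≤ z) (hb : z ≤ b ∨ b ≤ z)
    (hz : z ∉ Icc a b) : z ≤ a ∨ b ≤ z := by
  rw [mem_Icc] at hz
  tauto

lemma endpoints_mem_image_of_isMaxChain (hab : a ≤ b) {d : Set (Icc a b)}
    (hd : IsMaxChain (· ≤ ·) d) : a ∈ Subtype.val '' d ∧ b ∈ Subtype.val '' d :=
  have : Fact (a ≤ b) := ⟨hab⟩
  ⟨⟨⊥, hd.bot_mem, rfl⟩, ⟨⊤, hd.top_mem, rfl⟩⟩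

def spliceIcc (C : Set α) (d : Set (Icc a b)) : Set α :=
  (C \ Icc a b) ∪ Subtype.val '' d

lemma spliceIcc_inter_Icc (C : Set α) (d : Set (Icc a b)) :
    spliceIcc C d ∩ Icc a b = Subtype.val '' d := by
  rw [spliceIcc, union_inter_distrib_right, sdiff_inter_self, empty_union,
    inter_eq_left.2 (Subtype.coe_image_subset _ d)]

lemma symmDiff_spliceIcc {C : Set α} {c : Set (Icc a b)} (hCI : C ∩ Icc a b = Subtype.val '' c)
    (d : Set (Icc a b)) : C ∆ spliceIcc C d = Subtype.val '' (c ∆ d) := by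
  rw [image_symmDiff Subtype.val_injective, ← hCI]
  ext z
  have hdI : z ∈ Subtype.val '' d → z ∈ Icc a b := fun hz => Subtype.coe_image_subset _ d hz
  simp only [spliceIcc, mem_symmDiff, mem_union, mem_sdiff, mem_inter_iff]
  tauto

lemma IsChain.spliceIcc {C : Set α} {d : Set (Icc a b)} (hC : IsChain (· ≤ ·) C) (ha : a ∈ C)
    (hb : b ∈ C) (hd : IsChain (· ≤ ·) d) : IsChain (· ≤ ·) (spliceIcc C d) := by
  have hcross : ∀ z ∈ C \ Icc a b, ∀ w : Icc a b, z ≤ w ∨ (w : α) ≤ z := fun z hz w =>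
    (le_or_le_of_notMem_Icc (hC.total hz.1 ha) (hC.total hz.1 hb) hz.2).imp
      (·.trans w.2.1) w.2.2.trans
  rintro z (hz | ⟨z, hz, rfl⟩) w (hw | ⟨w, hw, rfl⟩) hzw
  · exact hC hz.1 hw.1 hzw
  · exact hcross z hz w
  · exact (hcross w hw z).symm
  · exact hd hz hw (ne_of_apply_ne _ hzw)

lemma IsMaxChain.spliceIcc (hab : a ≤ b) {C : Set α} {c d : Set (Icc a b)}
    (hC : IsMaxChain (· ≤ ·) C) (hc : IsMaxChain (· ≤ ·) c) (hCI : C ∩ Icc a b = Subtype.val '' c)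
    (hd : IsMaxChain (· ≤ ·) d) : IsMaxChain (· ≤ ·) (spliceIcc C d) := by
  have hac := endpoints_mem_image_of_isMaxChain hab hc
  have had := endpoints_mem_image_of_isMaxChain hab hd
  refine ⟨hC.1.spliceIcc (hCI.superset hac.1).1 (hCI.superset hac.2).1 hd.1,
    fun t ht hst => hst.antisymm fun z hzt => ?_⟩
  have hz : ∀ w ∈ _root_.spliceIcc C d, z ≤ w ∨ w ≤ z := fun w hw => ht.total hzt (hst hw)
  by_cases hzI : z ∈ Icc a b
  · exact Or.inr ⟨⟨z, hzI⟩,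
      hd.mem_of_isChain_insert (hd.1.insert fun w hw _ => hz w (Or.inr ⟨w, hw, rfl⟩)), rfl⟩
  refine Or.inl ⟨hC.mem_of_isChain_insert (hC.1.insert fun w hwC _ => ?_), hzI⟩
  by_cases hwI : w ∈ Icc a b
  · exact (le_or_le_of_notMem_Icc (hz a (Or.inr had.1)) (hz b (Or.inr had.2)) hzI).imp
      (·.trans hwI.1) hwI.2.trans
  · exact hz w (Or.inl ⟨hwC, hwI⟩)

end Splice

section Grading

variable {α R : Type*} [PartialOrder α] [LinearOrder R] {ρ : α → R} {A : Set α}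

def MaxChainAdj (C D : Set α) : Prop :=
  IsMaxChain (· ≤ ·) C ∧ IsMaxChain (· ≤ ·) D ∧ (C ∆ D).ncard = 2

lemma exists_reflTransGen_maxChainAdj_inter_Icc_eq {a b : α} (hab : a ≤ b)
    (hsc : StronglyConnectedOrder (Icc a b)) {C : Set α} {c d : Set (Icc a b)}
    (hC : IsMaxChain (· ≤ ·) C) (hc : IsMaxChain (· ≤ ·) c) (hd : IsMaxChain (· ≤ ·) d)
    (hCI : C ∩ Icc a b = Subtype.val '' c) :
    ∃ D, ReflTransGen MaxChainAdj C D ∧ D ∩ Icc a b = Subtype.val '' d := by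
  obtain ⟨n, f, rfl, rfl, hf, hf2⟩ := hsc c d hc hd
  suffices ∀ i ≤ n, ∃ D, ReflTransGen MaxChainAdj C D ∧ IsMaxChain (· ≤ ·) D ∧
      D ∩ Icc a b = Subtype.val '' f i by
    obtain ⟨D, hCD, -, hDI⟩ := this n le_rfl
    exact ⟨D, hCD, hDI⟩
  intro i
  induction i with
  | zero => exact fun _ => ⟨C, .refl, hC, hCI⟩
  | succ i ih =>
    intro hi
    obtain ⟨D, hCD, hD, hDI⟩ := ih (by omega)
    have hD' := hD.spliceIcc hab (hf i (by omega)) hDI (hf (i + 1) hi)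
    have hflip : (D ∆ spliceIcc D (f (i + 1))).ncard = 2 := by
      rw [symmDiff_spliceIcc hDI, ncard_image_of_injective _ Subtype.val_injective]
      exact hf2 i (by omega)
    exact ⟨_, hCD.tail ⟨hD, hD', hflip⟩, hD', spliceIcc_inter_Icc _ _⟩

lemma IsRGrading.injOn (hρ : IsRGrading ρ) {C : Set α} (hC : IsMaxChain (· ≤ ·) C) :
    InjOn ρ C := fun x hx y hy hxy =>
  le_antisymm (((hρ C hC).1 x hx y hy).2 hxy.le) (((hρ C hC).1 y hy x hx).2 hxy.ge)

lemma IsRGrading.isAntichainCutset_setOf_eq (hρ : IsRGrading ρ) (r : R) :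
    IsAntichainCutset {x | ρ x = r} := fun C hC =>
  let ⟨x, hxC, hx⟩ := (hρ C hC).2 r
  ⟨x, ⟨hxC, hx⟩, fun _ hy => hρ.injOn hC hy.1 hxC (hy.2.trans hx.symm)⟩

lemma IsAntichainCutset.eq_of_mem (hA : IsAntichainCutset A) {C : Set α}
    (hC : IsMaxChain (· ≤ ·) C) {x y : α} (hxC : x ∈ C) (hxA : x ∈ A) (hyC : y ∈ C)
    (hyA : y ∈ A) : x = y :=
  (hA C hC).unique ⟨hxC, hxA⟩ ⟨hyC, hyA⟩

lemma IsAntichainCutset.grade_eq_of_maxChainAdj (hA : IsAntichainCutset A)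
    (hρ : IsRGrading ρ) {C D : Set α} (hCD : MaxChainAdj C D) {x y : α} (hxC : x ∈ C)
    (hxA : x ∈ A) (hyD : y ∈ D) (hyA : y ∈ A) : ρ x = ρ y := by
  obtain ⟨hC, hD, h2⟩ := hCD
  by_cases hxD : x ∈ D
  · rw [hA.eq_of_mem hD hxD hxA hyD hyA]
  have hyC : y ∉ C := fun hyC => hxD (hA.eq_of_mem hC hxC hxA hyC hyA ▸ hyD)
  obtain ⟨w, hwD, hw⟩ := (hρ D hD).2 (ρ x)
  have hwC : w ∉ C := fun hwC => hxD (hρ.injOn hC hwC hxC hw ▸ hwD)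
  have hwy : w = y := Set.eq_of_ncard_eq_two h2 (mem_symmDiff.2 (Or.inl ⟨hxC, hxD⟩))
    (mem_symmDiff.2 (Or.inr ⟨hwD, hwC⟩)) (mem_symmDiff.2 (Or.inr ⟨hyD, hyC⟩))
    (fun e => hxD (e ▸ hwD)) (fun e => hxD (e ▸ hyD))
  rw [← hwy, hw]

lemma IsAntichainCutset.grade_eq_of_reflTransGen (hA : IsAntichainCutset A)
    (hρ : IsRGrading ρ) {C D : Set α} (hC : IsMaxChain (· ≤ ·) C)
    (hCD : ReflTransGen MaxChainAdj C D) {x y : α} (hxC : x ∈ C) (hxA : x ∈ A) (hyD : y ∈ D)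
    (hyA : y ∈ A) : ρ x = ρ y := by
  induction hCD generalizing y with
  | refl => rw [hA.eq_of_mem hC hxC hxA hyD hyA]
  | tail _ hD'D ih =>
    obtain ⟨z, ⟨hzD', hzA⟩, -⟩ := hA _ hD'D.1
    exact (ih hzD' hzA).trans (hA.grade_eq_of_maxChainAdj hρ hD'D hzD' hzA hyD hyA)

lemma IsAntichainCutset.grade_eq (hA : IsAntichainCutset A) (hρ : IsRGrading ρ)
    (hloc : ∀ x y : α, ∃ a b : α, x ∈ Icc a b ∧ y ∈ Icc a b ∧ StronglyConnectedOrder (Icc a b))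
    {u v : α} (hu : u ∈ A) (hv : v ∈ A) : ρ u = ρ v := by
  obtain ⟨a, b, huI, hvI, hsc⟩ := hloc u v
  obtain ⟨c, hc, huc⟩ := exists_isMaxChain_mem (r := (· ≤ ·)) (⟨u, huI⟩ : Icc a b)
  obtain ⟨d, hd, hvd⟩ := exists_isMaxChain_mem (r := (· ≤ ·)) (⟨v, hvI⟩ : Icc a b)
  obtain ⟨C, hC, hCI⟩ := hc.exists_isMaxChain_inter_eq_image
  obtain ⟨D, hCD, hDI⟩ :=
    exists_reflTransGen_maxChainAdj_inter_Icc_eq (huI.1.trans huI.2) hsc hC hc hd hCI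
  exact hA.grade_eq_of_reflTransGen hρ hC hCD (hCI.superset ⟨_, huc, rfl⟩).1 hu
    (hDI.superset ⟨_, hvd, rfl⟩).1 hv

end Grading

/-- In a pairwise-locally strongly connected R-graded poset, the antichain cutsets are
exactly the (nonempty) level sets. -/
theorem antichain_cutsets_eq_level_sets {α R : Type*} [PartialOrder α] [LinearOrder R]
    (h : ∀ x y : α, ∃ a b : α, x ∈ Set.Icc a b ∧ y ∈ Set.Icc a b ∧
      StronglyConnectedOrder (Set.Icc a b))
    (ρ : α → R) (hρ : IsRGrading ρ) :
    ∀ A : Set α, IsAntichainCutset A ↔ ∃ r : R, A = {x | ρ x = r} ∧ A.Nonempty := by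
  intro A
  refine ⟨fun hA => ?_, fun ⟨r, hAr, _⟩ => hAr ▸ hρ.isAntichainCutset_setOf_eq r⟩
  obtain ⟨C₀, hC₀, -⟩ := (IsChain.empty (r := ((· ≤ ·) : α → α → Prop))).exists_maxChain
  obtain ⟨x₀, ⟨-, hx₀⟩, -⟩ := hA C₀ hC₀
  refine ⟨ρ x₀, Subset.antisymm (fun y hy => hA.grade_eq hρ h hy hx₀) fun y hy => ?_, x₀, hx₀⟩
  obtain ⟨D, hD, hyD⟩ := exists_isMaxChain_mem (r := (· ≤ ·)) y
  obtain ⟨z, ⟨hzD, hzA⟩, -⟩ := hA D hD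
  have hzy : z = y := hρ.injOn hD hzD hyD ((hA.grade_eq hρ h hzA hx₀).trans hy.symm)
  exact hzy ▸ hzA
end

section
/- In a finite semimodular lattice, the antichain cutsets are exactly the level sets of the rank function. -/
/-!
In an upper semimodular lattice two distinct elements covering a common element `w` are both
covered by their join. Applied to the first steps of two saturated chains with common endpoints,
this gives the Jordan–Dedekind chain condition, hence a rank function.

The same diamond relates two maximal chains that agree up to `w` and then pass through `x ≠ y`:
splicing each with a maximal chain through `x ⊔ y` gives two chains that agree with the originals
up to `x`, resp. `y`, and differ from each other only in `x` versus `y`, which have equal rank.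
An antichain cutset meets two such chains in elements of equal rank, so by downward induction on
`w` it meets every maximal chain in the same rank `k`; and a maximal chain through an element of
rank `k` meets the cutset exactly there.
-/

section

open Set

variable {α : Type*}

theorem CovBy.inf_eq_of_ne [Lattice α] {a b c : α} (hca : c ⋖ a) (hcb : c ⋖ b) (hab : a ≠ b) :
    a ⊓ b = c := by
  refine (hca.eq_or_eq (le_inf hca.le hcb.le) inf_le_left).resolve_right fun h => hab ?_
  exact (hcb.eq_or_eq hca.le (h ▸ inf_le_right)).resolve_left hca.lt.ne'

theorem CovBy.covBy_sup_of_ne [Lattice α] [IsUpperModularLattice α] {a b c : α} (hca : c ⋖ a)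
    (hcb : c ⋖ b) (hab : a ≠ b) : a ⋖ a ⊔ b ∧ b ⋖ a ⊔ b := by
  have hinf := hca.inf_eq_of_ne hcb hab
  exact ⟨covBy_sup_of_inf_covBy_right (hinf ▸ hcb), covBy_sup_of_inf_covBy_left (hinf ▸ hca)⟩

inductive CovChain [Preorder α] : ℕ → α → α → Prop
  | refl (a : α) : CovChain 0 a a
  | cons {n : ℕ} {a b c : α} : a ⋖ b → CovChain n b c → CovChain (n + 1) a c

namespace CovChain

section Preorder

variable [Preorder α] {n : ℕ} {a b c : α}

theorem le (h : CovChain n a b) : a ≤ b := by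
  induction h with
  | refl => exact le_rfl
  | cons hab _ ih => exact hab.le.trans ih

theorem snoc (h : CovChain n a b) (hbc : b ⋖ c) : CovChain (n + 1) a c := by
  induction h with
  | refl a => exact .cons hbc (.refl c)
  | cons hab _ ih => exact .cons hab (ih hbc)

theorem apply_eq_add {f : α → ℕ} (hf : ∀ ⦃a b⦄, a ⋖ b → f b = f a + 1) (h : CovChain n a b) :
    f b = f a + n := by
  induction h with
  | refl => rfl
  | cons hab _ ih =>
    rw [ih, hf hab]
    omega

end Preorder

theorem exists_of_le [PartialOrder α] [Finite α] {a b : α} (hab : a ≤ b) :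
    ∃ n, CovChain n a b := by
  induction a using WellFoundedGT.induction with
  | _ a ih =>
    rcases hab.eq_or_lt with rfl | hlt
    · exact ⟨0, .refl a⟩
    obtain ⟨c, hac, hcb⟩ := exists_covBy_le_of_lt hlt
    obtain ⟨n, hn⟩ := ih c hac.lt hcb
    exact ⟨n + 1, .cons hac hn⟩

theorem length_eq [Lattice α] [Finite α] [IsUpperModularLattice α] {m n : ℕ} {a b : α}
    (hm : CovChain m a b) (hn : CovChain n a b) : m = n := by
  induction a using WellFoundedGT.induction generalizing m n with
  | _ a ih =>
    cases hm with
    | refl =>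
      cases hn with
      | refl => rfl
      | cons hay hy => exact absurd hy.le hay.lt.not_ge
    | @cons _ _ x _ hax hx =>
      cases hn with
      | refl => exact absurd hx.le hax.lt.not_ge
      | @cons _ _ y _ hay hy =>
        by_cases hxy : x = y
        · subst hxy
          rw [ih x hax.lt hx hy]
        obtain ⟨hxz, hyz⟩ := hax.covBy_sup_of_ne hay hxy
        obtain ⟨k, hk⟩ := exists_of_le (sup_le hx.le hy.le)
        rw [ih x hax.lt hx (.cons hxz hk), ih y hay.lt hy (.cons hyz hk)]

end CovChain

@[reducible]
noncomputable def IsUpperModularLattice.gradeMinOrder [Lattice α] [OrderBot α] [Finite α]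
    [IsUpperModularLattice α] : GradeMinOrder ℕ α :=
  let r (a : α) : ℕ := (CovChain.exists_of_le (bot_le (a := a))).choose
  have hr (a : α) : CovChain (r a) ⊥ a := (CovChain.exists_of_le bot_le).choose_spec
  have hcov ⦃a b : α⦄ (h : a ⋖ b) : r b = r a + 1 := (hr b).length_eq ((hr a).snoc h)
  { grade := r
    grade_strictMono := fun a b hab => by
      obtain ⟨n, hn⟩ := CovChain.exists_of_le hab.le
      have hn0 : n ≠ 0 := by
        rintro rfl
        cases hn
        exact hab.false
      rw [hn.apply_eq_add hcov]
      omega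
    covBy_grade := fun _ _ h => Nat.covBy_iff_add_one_eq.2 (hcov h).symm
    isMin_grade := fun a ha => by
      rw [ha.eq_bot, (hr ⊥).length_eq (.refl ⊥)]
      exact isMin_bot }

theorem isMaxChain_of_forall_le_or_ge [Preorder α] {s : Set α} (hs : IsChain (· ≤ ·) s)
    (h : ∀ a, (∀ b ∈ s, a ≤ b ∨ b ≤ a) → a ∈ s) : IsMaxChain (· ≤ ·) s := by
  refine ⟨hs, fun t ht hst => hst.antisymm fun a ha => h a fun b hb => ?_⟩
  rcases eq_or_ne a b with rfl | hab
  · exact .inl le_rfl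
  · exact ht ha (hst hb) hab

theorem inter_Iic_union_inter_Ici_inter_Iic [Preorder α] (s t : Set α) {a b : α} (hab : a < b) :
    (s ∩ Iic a ∪ t ∩ Ici b) ∩ Iic a = s ∩ Iic a := by
  ext u
  constructor
  · rintro ⟨hu | ⟨-, hbu⟩, hua⟩
    · exact hu
    · exact absurd (hbu.trans hua) hab.not_ge
  · rintro hu
    exact ⟨.inl hu, hu.2⟩

namespace Flag

variable [PartialOrder α]

theorem exists_covBy_mem [OrderTop α] [Finite α] (s : Flag α) {a : α} (ha : a ∈ s)
    (hat : a ≠ ⊤) : ∃ b ∈ s, a ⋖ b := by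
  have : (⟨a, ha⟩ : s) < ⊤ := lt_top_iff_ne_top.2 fun h => hat (congrArg Subtype.val h)
  obtain ⟨b, hab, -⟩ := exists_covBy_le_of_lt this
  exact ⟨b, b.2, coe_covBy_coe.2 hab⟩

theorem inter_Iic_eq_insert (s : Flag α) {a b : α} (ha : a ∈ s) (hb : b ∈ s) (hab : a ⋖ b) :
    (s : Set α) ∩ Iic b = insert b ((s : Set α) ∩ Iic a) := by
  ext t
  constructor
  · rintro ⟨hts, htb⟩
    rcases s.le_or_le hts ha with hta | hat
    · exact .inr ⟨hts, hta⟩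
    · rcases hab.eq_or_eq hat htb with rfl | rfl
      · exact .inr ⟨hts, le_rfl⟩
      · exact .inl rfl
  · rintro (rfl | ⟨hts, hta⟩)
    · exact ⟨hb, le_rfl⟩
    · exact ⟨hts, hta.trans hab.le⟩

theorem eq_of_grade_eq [GradeOrder ℕ α] (s : Flag α) {a b : α} (ha : a ∈ s) (hb : b ∈ s)
    (h : grade ℕ a = grade ℕ b) : a = b := by
  by_contra hab
  rcases s.le_or_le ha hb with hle | hle
  · exact (grade_strictMono (hle.lt_of_ne hab)).ne h
  · exact (grade_strictMono (hle.lt_of_ne' hab)).ne' h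

theorem exists_mem_grade_eq [BoundedOrder α] [Finite α] [GradeMinOrder ℕ α] (s : Flag α)
    {k : ℕ} (hk : k ≤ grade ℕ (⊤ : α)) : ∃ a ∈ s, grade ℕ a = k := by
  induction k with
  | zero => exact ⟨⊥, s.bot_mem, grade_bot⟩
  | succ k ih =>
    obtain ⟨a, ha, rfl⟩ := ih (by omega)
    have hat : a ≠ ⊤ := by
      rintro rfl
      omega
    obtain ⟨b, hb, hab⟩ := s.exists_covBy_mem ha hat
    exact ⟨b, hb, (Nat.covBy_iff_add_one_eq.1 (hab.grade ℕ)).symm⟩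

theorem isMaxChain_inter_Iic_union_inter_Ici (c e : Flag α) {x z : α} (hx : x ∈ c) (hz : z ∈ e)
    (hxz : x ⋖ z) : IsMaxChain (· ≤ ·) ((c : Set α) ∩ Iic x ∪ (e : Set α) ∩ Ici z) := by
  refine isMaxChain_of_forall_le_or_ge ?_ fun t ht => ?_
  · rintro a (⟨hac, hax⟩ | ⟨hae, hza⟩) b (⟨hbc, hbx⟩ | ⟨hbe, hzb⟩) hab
    · exact c.chain_le hac hbc hab
    · exact .inl (hax.trans (hxz.le.trans hzb))
    · exact .inr (hbx.trans (hxz.le.trans hza))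
    · exact e.chain_le hae hbe hab
  rcases ht x (.inl ⟨hx, le_rfl⟩) with htx | hxt
  · refine .inl ⟨c.mem_iff_forall_le_or_ge.2 fun u hu => ?_, htx⟩
    rcases c.le_or_le hu hx with hux | hxu
    · exact ht u (.inl ⟨hu, hux⟩)
    · exact .inl (htx.trans hxu)
  rcases ht z (.inr ⟨hz, le_rfl⟩) with htz | hzt
  · rcases hxz.eq_or_eq hxt htz with rfl | rfl
    · exact .inl ⟨hx, le_rfl⟩
    · exact .inr ⟨hz, le_rfl⟩
  · refine .inr ⟨e.mem_iff_forall_le_or_ge.2 fun u hu => ?_, hzt⟩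
    rcases e.le_or_le hu hz with huz | hzu
    · exact .inr (huz.trans hzt)
    · exact ht u (.inr ⟨hu, hzu⟩)

end Flag

theorem isAntichainCutset_setOf_grade_eq [PartialOrder α] [BoundedOrder α] [Finite α]
    [GradeMinOrder ℕ α] {k : ℕ} (hk : {a : α | grade ℕ a = k}.Nonempty) :
    IsAntichainCutset {a : α | grade ℕ a = k} := by
  intro c hc
  obtain ⟨a, rfl⟩ := hk
  let s := Flag.ofIsMaxChain c hc
  obtain ⟨b, hb, hba⟩ := s.exists_mem_grade_eq (grade_mono le_top : grade ℕ a ≤ _)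
  exact ⟨b, ⟨hb, hba⟩, fun b' hb' => s.eq_of_grade_eq hb'.1 hb (hb'.2.trans hba.symm)⟩

namespace IsAntichainCutset

section PartialOrder

variable [PartialOrder α] {A : Set α} (hA : IsAntichainCutset A)

noncomputable def point (s : Flag α) : α := (hA s s.maxChain).exists.choose

theorem point_mem (s : Flag α) : hA.point s ∈ (s : Set α) ∧ hA.point s ∈ A :=
  (hA s s.maxChain).exists.choose_spec

theorem eq_point {s : Flag α} {a : α} (has : a ∈ s) (haA : a ∈ A) : a = hA.point s :=
  (hA s s.maxChain).unique ⟨has, haA⟩ (hA.point_mem s)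

theorem point_eq_or_of_coe_eq_insert {c d : Flag α} {x y : α} {T : Set α}
    (hc : (c : Set α) = insert x T) (hd : (d : Set α) = insert y T) :
    hA.point c = hA.point d ∨ hA.point c = x ∧ hA.point d = y := by
  obtain ⟨hpc, hpA⟩ := hA.point_mem c
  obtain ⟨hqd, hqA⟩ := hA.point_mem d
  rw [hc] at hpc
  rw [hd] at hqd
  rcases hpc with hpx | hpT
  · rcases hqd with hqy | hqT
    · exact .inr ⟨hpx, hqy⟩
    · exact .inl (hA.eq_point (show _ ∈ (c : Set α) from hc ▸ .inr hqT) hqA).symm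
  · exact .inl (hA.eq_point (show _ ∈ (d : Set α) from hd ▸ .inr hpT) hpA)

end PartialOrder

variable [Lattice α] [Finite α] [IsUpperModularLattice α] [GradeOrder ℕ α] {A : Set α}

theorem grade_point_eq_of_inter_Iic_eq [OrderTop α] (hA : IsAntichainCutset A) {c d : Flag α}
    {w : α} (hw : w ∈ c) (h : (c : Set α) ∩ Iic w = (d : Set α) ∩ Iic w) :
    grade ℕ (hA.point c) = grade ℕ (hA.point d) := by
  induction w using WellFoundedGT.induction generalizing c d with
  | _ w ih =>
  have hwd : w ∈ d := (h ▸ ⟨hw, le_rfl⟩ : w ∈ (d : Set α) ∩ Iic w).1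
  rcases eq_or_ne w ⊤ with rfl | hwt
  · rw [Flag.ext (by simpa using h : (c : Set α) = d)]
  obtain ⟨x, hx, hwx⟩ := c.exists_covBy_mem hw hwt
  obtain ⟨y, hy, hwy⟩ := d.exists_covBy_mem hwd hwt
  have hcx := c.inter_Iic_eq_insert hw hx hwx
  have hdy := d.inter_Iic_eq_insert hwd hy hwy
  by_cases hxy : x = y
  · subst hxy
    exact ih x hwx.lt hx (by rw [hcx, hdy, h])
  obtain ⟨hxz, hyz⟩ := hwx.covBy_sup_of_ne hwy hxy
  obtain ⟨e, he⟩ := Flag.exists_mem (x ⊔ y)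
  let c' := Flag.ofIsMaxChain _ (c.isMaxChain_inter_Iic_union_inter_Ici e hx he hxz)
  let d' := Flag.ofIsMaxChain _ (d.isMaxChain_inter_Iic_union_inter_Ici e hy he hyz)
  have hgrade : grade ℕ x = grade ℕ y := by
    rw [← Nat.covBy_iff_add_one_eq.1 (hwx.grade ℕ), ← Nat.covBy_iff_add_one_eq.1 (hwy.grade ℕ)]
  calc grade ℕ (hA.point c) = grade ℕ (hA.point c') :=
        ih x hwx.lt hx (inter_Iic_union_inter_Ici_inter_Iic _ _ hxz.lt).symm
    _ = grade ℕ (hA.point d') := by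
        rcases hA.point_eq_or_of_coe_eq_insert (c := c') (d := d')
          (T := (c : Set α) ∩ Iic w ∪ (e : Set α) ∩ Ici (x ⊔ y))
          (by rw [Flag.coe_ofIsMaxChain, hcx, insert_union])
          (by rw [Flag.coe_ofIsMaxChain, hdy, ← h, insert_union]) with hpq | ⟨hp, hq⟩
        · rw [hpq]
        · rw [hp, hq, hgrade]
    _ = grade ℕ (hA.point d) :=
        (ih y hwy.lt hy (inter_Iic_union_inter_Ici_inter_Iic _ _ hyz.lt).symm).symm

theorem grade_point_eq [BoundedOrder α] (hA : IsAntichainCutset A) (c d : Flag α) :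
    grade ℕ (hA.point c) = grade ℕ (hA.point d) :=
  hA.grade_point_eq_of_inter_Iic_eq c.bot_mem (by simp [Iic_bot, c.bot_mem, d.bot_mem])

theorem exists_eq_setOf_grade_eq [BoundedOrder α] (hA : IsAntichainCutset A) :
    ∃ k, A = {a | grade ℕ a = k} ∧ A.Nonempty := by
  obtain ⟨s₀⟩ := (inferInstance : Nonempty (Flag α))
  refine ⟨grade ℕ (hA.point s₀), ?_, _, (hA.point_mem s₀).2⟩
  ext a
  obtain ⟨s, has⟩ := Flag.exists_mem a
  rw [← hA.grade_point_eq s s₀]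
  refine ⟨fun haA => congrArg (grade ℕ) (hA.eq_point has haA), fun h => ?_⟩
  rw [s.eq_of_grade_eq has (hA.point_mem s).1 h]
  exact (hA.point_mem s).2

end IsAntichainCutset

end

/-- In a finite semimodular lattice, the antichain cutsets are exactly the level sets
of the rank function. -/
theorem antichain_cutsets_semimodular {α : Type*} [Lattice α] [Fintype α]
    [BoundedOrder α] (hsm : ∀ x y : α, x ⊓ y ⋖ x → y ⋖ x ⊔ y) :
    ∃ r : α → ℕ, r ⊥ = 0 ∧ (∀ x y : α, x ⋖ y → r y = r x + 1) ∧
      ∀ A : Set α, IsAntichainCutset A ↔ ∃ k : ℕ, A = {x | r x = k} ∧ A.Nonempty := by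
  have : IsUpperModularLattice α := ⟨fun {a b} => hsm a b⟩
  have := IsUpperModularLattice.gradeMinOrder (α := α)
  refine ⟨grade ℕ, grade_bot, fun x y h => (Nat.covBy_iff_add_one_eq.1 (h.grade ℕ)).symm,
    fun A => ⟨IsAntichainCutset.exists_eq_setOf_grade_eq, ?_⟩⟩
  rintro ⟨k, rfl, hk⟩
  exact isAntichainCutset_setOf_grade_eq hk
end
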